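/- There exist constants 0 < c ≤ C, depending only on n, such that for all x, y ∈ ℝⁿ₊ with x ≠ y, c |x − y| / √( |x − y| + x_n + y_n ) ≤ d(x, y) ≤ C |x − y| / √( |x − y| + x_n + y_n ), where x_n, y_n denote the n-th coordinates of x and y. -/

import Mathlib

/-!
For the lower bound, take any admissible path, of Euclidean length `ℓ ≥ |x - y|`. Its height
never exceeds `x_n + ℓ`, so its weighted length is at least `ℓ / √(x_n + ℓ)`, and `u ↦ u / √(A + u)`
is increasing.

For the upper bound, follow `x + s(t) (y - x) + |x - y| ψ(t)² e_n` with `ψ(t) = t (1 - t)` and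
the smoothstep `s(t) = t² (3 - 2t)`, whose derivative `6ψ(t)` vanishes at the ends. The speed is at
most `8 |x - y| ψ(t)` and the height at least `ψ(t)² (|x - y| + x_n + y_n)`, so the integrand is
bounded by `8 |x - y| / √(|x - y| + x_n + y_n)` on all of `[0, 1]`.
-/

open MeasureTheory Metric Set Filter Topology

noncomputable section

/-- The intrinsic distance on the upper half-space `ℝⁿ₊`, induced by the Riemannian
metric `g_x(v,w) = x_n⁻¹ v·w`: the infimum of the lengths
`∫_a^b |γ'(t)| (γ_n(t))^{-1/2} dt` over `C¹` paths in `ℝⁿ₊` joining `x` to `y`. -/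
def intrinsicDist (n : ℕ) (hn : 1 ≤ n)
    (x y : EuclideanSpace ℝ (Fin n)) : ℝ :=
  sInf {L : ℝ | ∃ (a b : ℝ) (γ : ℝ → EuclideanSpace ℝ (Fin n)),
    a ≤ b ∧ ContDiffOn ℝ 1 γ (Icc a b) ∧
    (∀ t ∈ Icc a b, 0 < γ t ⟨n - 1, by omega⟩) ∧
    γ a = x ∧ γ b = y ∧
    L = ∫ t in a..b, ‖derivWithin γ (Icc a b) t‖ *
          (γ t ⟨n - 1, by omega⟩) ^ (-(1 : ℝ) / 2)}

open intervalIntegral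

theorem Real.rpow_neg_half_eq_inv_sqrt {u : ℝ} (hu : 0 ≤ u) : u ^ (-(1 : ℝ) / 2) = (√u)⁻¹ := by
  rw [neg_div, Real.rpow_neg hu, Real.sqrt_eq_rpow, one_div]

theorem div_sqrt_add_le_div_sqrt_add {A r l : ℝ} (hA : 0 ≤ A) (hr : 0 ≤ r) (hrl : r ≤ l) :
    r / √(A + r) ≤ l / √(A + l) := by
  rcases hr.eq_or_lt with rfl | hr
  · rw [zero_div]
    positivity
  rw [div_le_div_iff₀ (Real.sqrt_pos.2 (by linarith)) (Real.sqrt_pos.2 (by linarith)),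
    ← pow_le_pow_iff_left₀ (by positivity) (mul_nonneg (hr.le.trans hrl) (Real.sqrt_nonneg _))
      two_ne_zero, mul_pow, mul_pow, Real.sq_sqrt (by linarith), Real.sq_sqrt (by linarith)]
  nlinarith [mul_nonneg hA (sub_nonneg.2 hrl),
    mul_nonneg (mul_nonneg hr.le (hr.le.trans hrl)) (sub_nonneg.2 hrl)]

section LowerBound

variable {E : Type*} [NormedAddCommGroup E] [NormedSpace ℝ E] [CompleteSpace E]
  {γ : ℝ → E} {a b : ℝ}

theorem norm_sub_le_integral_norm_derivWithin (hab : a < b) (hγ : ContDiffOn ℝ 1 γ (Icc a b))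
    {t : ℝ} (ht : t ∈ Icc a b) :
    ‖γ t - γ a‖ ≤ ∫ s in a..t, ‖derivWithin γ (Icc a b) s‖ := by
  have hderiv : ∀ s ∈ Ioo a t, HasDerivAt γ (derivWithin γ (Icc a b) s) s := fun s hs =>
    (hγ.differentiableOn one_ne_zero s ⟨hs.1.le, hs.2.le.trans ht.2⟩).hasDerivWithinAt.hasDerivAt
      (Icc_mem_nhds hs.1 (hs.2.trans_le ht.2))
  have hint : IntervalIntegrable (derivWithin γ (Icc a b)) volume a t :=
    ((hγ.continuousOn_derivWithin (uniqueDiffOn_Icc hab) le_rfl).mono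
      (Icc_subset_Icc le_rfl ht.2)).intervalIntegrable_of_Icc ht.1
  rw [← integral_eq_sub_of_hasDerivAt_of_le ht.1
    (hγ.continuousOn.mono (Icc_subset_Icc le_rfl ht.2)) hderiv hint]
  exact norm_integral_le_integral_norm ht.1

theorem norm_sub_div_sqrt_le_integral {φ : E → ℝ} (hφ : LipschitzWith 1 φ) (hab : a ≤ b)
    (hγ : ContDiffOn ℝ 1 γ (Icc a b)) (hpos : ∀ t ∈ Icc a b, 0 < φ (γ t)) :
    ‖γ a - γ b‖ / √(‖γ a - γ b‖ + φ (γ a) + φ (γ b)) ≤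
      ∫ t in a..b, ‖derivWithin γ (Icc a b) t‖ * φ (γ t) ^ (-(1 : ℝ) / 2) := by
  rcases hab.eq_or_lt with rfl | hab
  · simp
  set v : ℝ → ℝ := fun t => ‖derivWithin γ (Icc a b) t‖
  set ℓ := ∫ t in a..b, v t
  have hv : ContinuousOn v (Icc a b) :=
    (hγ.continuousOn_derivWithin (uniqueDiffOn_Icc hab) le_rfl).norm
  have hlen : ∀ t ∈ Icc a b, ‖γ t - γ a‖ ≤ ℓ := fun t ht =>
    (norm_sub_le_integral_norm_derivWithin hab hγ ht).trans <| integral_mono_interval le_rfl ht.1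
      ht.2 (ae_of_all _ fun _ => norm_nonneg _) (hv.intervalIntegrable_of_Icc hab.le)
  have hℓ : ‖γ b - γ a‖ ≤ ℓ := hlen b (right_mem_Icc.2 hab.le)
  have hheight : ∀ t ∈ Icc a b, φ (γ t) ≤ φ (γ a) + ℓ := fun t ht => by
    have := hφ.dist_le_mul (γ t) (γ a)
    rw [Real.dist_eq, dist_eq_norm, NNReal.coe_one, one_mul] at this
    linarith [le_abs_self (φ (γ t) - φ (γ a)), hlen t ht]
  have ha := hpos a (left_mem_Icc.2 hab.le)
  have hb := hpos b (right_mem_Icc.2 hab.le)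
  have hφγ : ContinuousOn (fun t => φ (γ t)) (Icc a b) :=
    hφ.continuous.comp_continuousOn hγ.continuousOn
  calc ‖γ a - γ b‖ / √(‖γ a - γ b‖ + φ (γ a) + φ (γ b))
      ≤ ‖γ b - γ a‖ / √(φ (γ a) + ‖γ b - γ a‖) := by
        rw [norm_sub_rev]
        exact div_le_div_of_nonneg_left (norm_nonneg _)
          (Real.sqrt_pos.2 (add_pos_of_pos_of_nonneg ha (norm_nonneg _)))
          (Real.sqrt_le_sqrt (by linarith))
    _ ≤ ℓ / √(φ (γ a) + ℓ) := div_sqrt_add_le_div_sqrt_add ha.le (norm_nonneg _) hℓ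
    _ = ∫ t in a..b, v t * (φ (γ a) + ℓ) ^ (-(1 : ℝ) / 2) := by
        rw [intervalIntegral.integral_mul_const,
          Real.rpow_neg_half_eq_inv_sqrt (by linarith [(norm_nonneg _).trans hℓ]), div_eq_mul_inv]
    _ ≤ ∫ t in a..b, v t * φ (γ t) ^ (-(1 : ℝ) / 2) := by
        refine integral_mono_on hab.le
          ((hv.mul continuousOn_const).intervalIntegrable_of_Icc hab.le)
          ((hv.mul (hφγ.rpow_const fun t ht => Or.inl (hpos t ht).ne')).intervalIntegrable_of_Icc
            hab.le) fun t ht => ?_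
        exact mul_le_mul_of_nonneg_left
          (Real.rpow_le_rpow_of_nonpos (hpos t ht) (hheight t ht) (by norm_num)) (norm_nonneg _)

end LowerBound

section ArchPath

variable {ι : Type*} [Fintype ι] [DecidableEq ι] (x y : EuclideanSpace ℝ ι) (i : ι)

def archPath (t : ℝ) : EuclideanSpace ℝ ι :=
  x + (t ^ 2 * (3 - 2 * t)) • (y - x) + (‖x - y‖ * (t * (1 - t)) ^ 2) • EuclideanSpace.single i 1

@[simp] theorem archPath_zero : archPath x y i 0 = x := by simp [archPath]

@[simp] theorem archPath_one : archPath x y i 1 = y := by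
  simp [archPath, show (3 : ℝ) - 2 = 1 by norm_num]

theorem archPath_apply_self (t : ℝ) :
    archPath x y i t i = (1 - t ^ 2 * (3 - 2 * t)) * x i + t ^ 2 * (3 - 2 * t) * y i +
      ‖x - y‖ * (t * (1 - t)) ^ 2 := by
  simp [archPath]
  ring

theorem hasDerivAt_archPath (t : ℝ) :
    HasDerivAt (archPath x y i) ((6 * (t * (1 - t))) • (y - x) +
      (‖x - y‖ * (2 * (t * (1 - t)) * (1 - 2 * t))) • EuclideanSpace.single i 1) t := by
  have hs : HasDerivAt (fun t : ℝ => t ^ 2 * (3 - 2 * t)) (6 * (t * (1 - t))) t :=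
    ((hasDerivAt_pow 2 t).mul (((hasDerivAt_id' t).const_mul 2).const_sub 3)).congr_deriv
      (by simp only [Nat.cast_ofNat, Nat.reduceSub, pow_one]; ring)
  have hψ : HasDerivAt (fun t : ℝ => ‖x - y‖ * (t * (1 - t)) ^ 2)
      (‖x - y‖ * (2 * (t * (1 - t)) * (1 - 2 * t))) t :=
    ((((hasDerivAt_id' t).mul ((hasDerivAt_id' t).const_sub 1)).pow 2).const_mul _).congr_deriv
      (by simp only [Nat.cast_ofNat, Nat.reduceSub, pow_one, Pi.mul_apply]; ring)
  exact ((hs.smul_const (y - x)).const_add x).add (hψ.smul_const _)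

theorem contDiff_archPath : ContDiff ℝ 1 (archPath x y i) := by
  unfold archPath
  fun_prop

theorem norm_deriv_archPath_le {t : ℝ} (ht : t ∈ Icc (0 : ℝ) 1) :
    ‖deriv (archPath x y i) t‖ ≤ 8 * ‖x - y‖ * (t * (1 - t)) := by
  have hψ : 0 ≤ t * (1 - t) := mul_nonneg ht.1 (sub_nonneg.2 ht.2)
  have h12 : |1 - 2 * t| ≤ 1 := abs_le.2 ⟨by linarith [ht.2], by linarith [ht.1]⟩
  rw [(hasDerivAt_archPath x y i t).deriv]
  refine (norm_add_le _ _).trans ?_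
  rw [norm_smul, norm_smul, PiLp.norm_single, norm_one, mul_one, norm_sub_rev y, Real.norm_eq_abs,
    Real.norm_eq_abs, abs_of_nonneg (by positivity), abs_mul, abs_mul,
    abs_of_nonneg (norm_nonneg _), abs_of_nonneg (by positivity)]
  nlinarith [mul_le_mul_of_nonneg_left h12 (mul_nonneg (norm_nonneg (x - y)) hψ)]

theorem sq_mul_le_archPath_apply_self (hx : 0 ≤ x i) (hy : 0 ≤ y i) {t : ℝ}
    (ht : t ∈ Icc (0 : ℝ) 1) :
    (t * (1 - t)) ^ 2 * (‖x - y‖ + x i + y i) ≤ archPath x y i t i := by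
  obtain ⟨h0, h1⟩ := ht
  have hs : (t * (1 - t)) ^ 2 ≤ t ^ 2 * (3 - 2 * t) := by
    nlinarith [mul_nonneg (sq_nonneg t) (show 0 ≤ 2 - t ^ 2 by nlinarith)]
  have hs' : (t * (1 - t)) ^ 2 ≤ 1 - t ^ 2 * (3 - 2 * t) := by
    nlinarith [mul_nonneg (sq_nonneg (1 - t)) (show 0 ≤ 1 + 2 * t - t ^ 2 by nlinarith)]
  rw [archPath_apply_self]
  nlinarith [mul_le_mul_of_nonneg_right hs hy, mul_le_mul_of_nonneg_right hs' hx]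

theorem archPath_apply_self_pos (hx : 0 < x i) (hy : 0 < y i) {t : ℝ} (ht : t ∈ Icc (0 : ℝ) 1) :
    0 < archPath x y i t i := by
  obtain ⟨h0, h1⟩ := ht
  have hs : 0 ≤ t ^ 2 * (3 - 2 * t) := by nlinarith
  have hs' : 0 ≤ 1 - t ^ 2 * (3 - 2 * t) := by
    nlinarith [mul_nonneg (sq_nonneg (1 - t)) (show 0 ≤ 1 + 2 * t by linarith)]
  rw [archPath_apply_self]
  nlinarith [mul_nonneg hs' hx.le, mul_nonneg hs hy.le,
    mul_nonneg (norm_nonneg (x - y)) (sq_nonneg (t * (1 - t)))]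

theorem integral_archPath_le (hx : 0 < x i) (hy : 0 < y i) :
    ∫ t in (0 : ℝ)..1, ‖derivWithin (archPath x y i) (Icc 0 1) t‖ *
        archPath x y i t i ^ (-(1 : ℝ) / 2) ≤ 8 * (‖x - y‖ / √(‖x - y‖ + x i + y i)) := by
  set h := ‖x - y‖ + x i + y i
  have hh : 0 < h := by linarith [norm_nonneg (x - y)]
  refine (Real.le_norm_self _).trans <| (intervalIntegral.norm_integral_le_of_norm_le_const
    (C := 8 * (‖x - y‖ / √h)) fun t ht => ?_).trans_eq (by norm_num)
  rw [uIoc_of_le zero_le_one] at ht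
  replace ht := Ioc_subset_Icc_self ht
  have hu := archPath_apply_self_pos x y i hx hy ht
  have hψ : 0 ≤ t * (1 - t) := mul_nonneg ht.1 (sub_nonneg.2 ht.2)
  rw [Real.norm_eq_abs, abs_of_nonneg (mul_nonneg (norm_nonneg _) (Real.rpow_nonneg hu.le _)),
    ((contDiff_archPath x y i).differentiable one_ne_zero t).derivWithin
      (uniqueDiffOn_Icc zero_lt_one t ht), Real.rpow_neg_half_eq_inv_sqrt hu.le, ← div_eq_mul_inv,
    div_le_iff₀ (Real.sqrt_pos.2 hu)]
  calc ‖deriv (archPath x y i) t‖ ≤ 8 * ‖x - y‖ * (t * (1 - t)) :=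
        norm_deriv_archPath_le x y i ht
    _ = 8 * (‖x - y‖ / √h) * √((t * (1 - t)) ^ 2 * h) := by
        rw [Real.sqrt_mul (sq_nonneg _), Real.sqrt_sq hψ]
        field_simp
    _ ≤ 8 * (‖x - y‖ / √h) * √(archPath x y i t i) := by
        gcongr
        exact sq_mul_le_archPath_apply_self x y i hx.le hy.le ht

end ArchPath

/-- Two-sided comparison of the intrinsic distance on the upper half-space:
`d(x,y) ≍ |x-y| / √(|x-y| + x_n + y_n)`, with constants depending only on `n`. -/
theorem intrinsicDist_comparable
    (n : ℕ) (hn : 1 ≤ n) :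
    ∃ c C : ℝ, 0 < c ∧ c ≤ C ∧
      ∀ x y : EuclideanSpace ℝ (Fin n),
        0 < x ⟨n - 1, by omega⟩ → 0 < y ⟨n - 1, by omega⟩ → x ≠ y →
        c * (‖x - y‖ / Real.sqrt (‖x - y‖ + x ⟨n - 1, by omega⟩ + y ⟨n - 1, by omega⟩)) ≤
            intrinsicDist n hn x y ∧
          intrinsicDist n hn x y ≤
            C * (‖x - y‖ / Real.sqrt (‖x - y‖ + x ⟨n - 1, by omega⟩ + y ⟨n - 1, by omega⟩)) := by
  refine ⟨1, 8, one_pos, by norm_num, fun x y hx hy _ => ?_⟩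
  set i : Fin n := ⟨n - 1, by omega⟩
  have hφ : LipschitzWith 1 fun z : EuclideanSpace ℝ (Fin n) => z i :=
    LipschitzWith.of_dist_le_mul fun z w => by simpa using PiLp.dist_apply_le z w i
  rw [one_mul, intrinsicDist]
  refine ⟨le_csInf ⟨_, ?path⟩ ?lower,
    csInf_le_of_le ⟨_, ?lower⟩ ?path (integral_archPath_le x y i hx hy)⟩
  · exact ⟨0, 1, archPath x y i, zero_le_one, (contDiff_archPath x y i).contDiffOn,
      fun t ht => archPath_apply_self_pos x y i hx hy ht, archPath_zero x y i,
      archPath_one x y i, rfl⟩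
  · rintro L ⟨a, b, γ, hab, hγ, hpos, rfl, rfl, rfl⟩
    exact norm_sub_div_sqrt_le_integral hφ hab hγ hpos
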